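/- arXiv:2108.00081 — 2 statements merged into one kernel-verified Lean document; each statement's English description precedes it below -/
import Mathlib

section
/- Let φ : Σ* → Γ* be a monoid homomorphism such that φ(Σ) is a strongly self-synchronizing code and φ is injective on Σ (|φ(Σ)| = |Σ|). Then for every u ∈ Γ* there is at most one w ∈ Σ* with φ(w) = u; i.e., φ is injective on Σ*. -/
/-- The set of prefixes of words of `C`. -/
def PrefSet {α : Type*} (C : Set (List α)) : Set (List α) :=
  {p | ∃ w ∈ C, p <+: w}

/-- `C` is a self-synchronizing code: `C` consists of nonempty words and
`C² ∩ Σ⁺CΣ⁺ = ∅`. -/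
def IsSelfSyncCode {α : Type*} (C : Set (List α)) : Prop :=
  (∀ w ∈ C, w ≠ []) ∧
  ∀ u ∈ C, ∀ v ∈ C, ∀ x y c : List α, c ∈ C → x ≠ [] → y ≠ [] →
    u ++ v ≠ x ++ c ++ y

/-- `C` is a strongly self-synchronizing code. -/
def IsStronglySelfSyncCode {α : Type*} (C : Set (List α)) : Prop :=
  IsSelfSyncCode C ∧
  ∀ u ∈ PrefSet C \ C, ∀ v ∈ C, ∀ x y c : List α, c ∈ C → y ≠ [] →
    u ++ v ≠ x ++ c ++ y

/-- A self-synchronizing code is a prefix code: a codeword that is a prefix of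
another codeword equals it. -/
lemma selfSync_prefix {α : Type*} {C : Set (List α)} (h : IsSelfSyncCode C)
    {u v : List α} (hu : u ∈ C) (hv : v ∈ C) (hpre : u <+: v) : u = v := by
  obtain ⟨t, rfl⟩ := hpre
  rcases eq_or_ne t [] with rfl | ht
  · simp
  exfalso
  exact h.2 (u ++ t) hv (u ++ t) hv (u ++ t) t u hu (h.1 _ hv) ht
    (by simp [List.append_assoc])

/-- If `φ` is the homomorphism determined by the letter map `f`, the images of
the letters form a strongly self-synchronizing code, and `f` is injective on the
letters, then `φ` is injective on all words: each `u ∈ Γ*` has at most one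
preimage. -/
theorem stmt_11 {α β : Type*} (f : α → List β)
    (hcode : IsStronglySelfSyncCode (Set.range f))
    (hinj : Function.Injective f) :
    Function.Injective (fun w : List α => (w.map f).flatten) := by
  obtain ⟨hss, -⟩ := hcode
  intro w v h
  simp only at h
  induction w generalizing v with
  | nil =>
    cases v with
    | nil => rfl
    | cons b v' =>
      exfalso
      simp only [List.map_nil, List.flatten_nil, List.map_cons, List.flatten_cons] at h
      have : f b = [] := by
        rcases List.append_eq_nil_iff.mp h.symm with ⟨h1, _⟩
        exact h1
      exact hss.1 (f b) ⟨b, rfl⟩ this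
  | cons a w' ih =>
    cases v with
    | nil =>
      exfalso
      simp only [List.map_nil, List.flatten_nil, List.map_cons, List.flatten_cons] at h
      rcases List.append_eq_nil_iff.mp h with ⟨h1, _⟩
      exact hss.1 (f a) ⟨a, rfl⟩ h1
    | cons b v' =>
      simp only [List.map_cons, List.flatten_cons] at h
      have hab : f a = f b := by
        have h1 : f a <+: f b ∨ f b <+: f a := by
          apply List.prefix_or_prefix_of_prefix (l₃ := f a ++ (w'.map f).flatten)
          · exact List.prefix_append _ _
          · rw [h]; exact List.prefix_append _ _
        rcases h1 with h1 | h1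
        · exact selfSync_prefix hss ⟨a, rfl⟩ ⟨b, rfl⟩ h1
        · exact (selfSync_prefix hss ⟨b, rfl⟩ ⟨a, rfl⟩ h1).symm
      have hab' : a = b := hinj hab
      subst hab'
      have : (w'.map f).flatten = (v'.map f).flatten :=
        List.append_cancel_left h
      rw [ih this]
end

section
/- Every language recognized by a polycyclic partial DFA is sparse: if B = (Σ, P, μ, p₀, F) is a PDFA such that for each state p there is a word u_p with {w | μ(p, w) = p} ⊆ u_p*, then |L(B) ∩ Σⁿ| = O(n^{|P|}). -/
/-- The run of a partial DFA with transition function `μ` from state `p` on a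
word `w` (`none` meaning undefined). -/
def prun {P α : Type*} (μ : P → α → Option P) (p : P) (w : List α) : Option P :=
  w.foldl (fun o x => o.bind fun q => μ q x) (some p)

namespace Stmt17

variable {P α : Type*}

lemma foldl_none (μ : P → α → Option P) (w : List α) :
    w.foldl (fun o x => o.bind fun q => μ q x) none = none := by
  induction w <;> simp [*]

lemma prun_append (μ : P → α → Option P) (p : P) (x y : List α) :
    prun μ p (x ++ y) = (prun μ p x).bind fun q => prun μ q y := by
  simp only [prun, List.foldl_append]
  cases h : List.foldl (fun o x => o.bind fun q => μ q x) (some p) x with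
  | none => simp [foldl_none]
  | some q => simp

lemma prun_cons (μ : P → α → Option P) (p : P) (a : α) (w : List α) :
    prun μ p (a :: w) = (μ p a).bind fun q => prun μ q w := by
  cases h : μ p a with
  | none => simp [prun, h, foldl_none]
  | some q => simp [prun, h]

lemma prun_nil (μ : P → α → Option P) (p : P) : prun μ p [] = some p := rfl

variable (μ : P → α → Option P) (p₀ : P) (u : P → List α)

def decode : P → List (ℕ × α) → ℕ → List α
  | p, [], kf => (List.replicate kf (u p)).flatten
  | p, (k, a) :: rest, kf =>
      (List.replicate k (u p)).flatten ++ a :: decode ((μ p a).getD p₀) rest kf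

def heads : P → List (ℕ × α) → List P
  | p, [] => [p]
  | p, (_, a) :: rest => p :: heads ((μ p a).getD p₀) rest

lemma len_flatten_replicate (j : ℕ) (l : List α) :
    (List.replicate j l).flatten.length = j * l.length := by
  simp [List.length_flatten, List.map_replicate, List.sum_replicate, smul_eq_mul]

lemma decomp
    (hu : ∀ p w, prun μ p w = some p → ∃ j, w = (List.replicate j (u p)).flatten) :
    ∀ (N : ℕ) (w : List α) (p f : P), w.length ≤ N → prun μ p w = some f →
    ∃ (pairs : List (ℕ × α)) (kf : ℕ),
      w = decode μ p₀ u p pairs kf ∧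
      (∀ x ∈ pairs, x.1 ≤ w.length) ∧ kf ≤ w.length ∧
      (heads μ p₀ p pairs).Nodup ∧
      ∀ h ∈ heads μ p₀ p pairs, ∃ v, v <+: w ∧ prun μ p v = some h := by
  classical
  intro N
  induction N with
  | zero =>
      intro w p f hw hrun
      have hwnil : w = [] := List.length_eq_zero_iff.mp (Nat.le_zero.mp hw)
      subst hwnil
      refine ⟨[], 0, ?_, by simp, by simp, by simp [heads], ?_⟩
      · simp [decode]
      · intro h hh
        simp [heads] at hh
        exact ⟨[], List.nil_prefix, by simp [prun_nil, hh]⟩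
  | succ N ih =>
      intro w p f hw hrun
      set Q : ℕ → Prop := fun m => prun μ p (w.take m) = some p with hQ
      set m : ℕ := Nat.findGreatest Q w.length with hm
      have hQ0 : Q 0 := by simp [hQ, prun_nil]
      have hmle : m ≤ w.length := Nat.findGreatest_le _
      have hQm : Q m := Nat.findGreatest_spec (Nat.zero_le _) hQ0
      set w₁ : List α := w.take m with hw₁
      set w₂ : List α := w.drop m with hw₂
      have hsplit : w = w₁ ++ w₂ := (List.take_append_drop m w).symm
      have hrun1 : prun μ p w₁ = some p := hQm
      have hrun2 : prun μ p w₂ = some f := by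
        have := hrun
        rw [hsplit, prun_append, hrun1] at this
        simpa using this
      have hlen1 : w₁.length = m := by
        simp [hw₁, Nat.min_eq_left hmle]
      -- get exponent for the loop w₁
      obtain ⟨j, hj⟩ := hu p w₁ hrun1
      set k : ℕ := if u p = [] then 0 else j with hk
      have hw₁k : w₁ = (List.replicate k (u p)).flatten := by
        by_cases hup : u p = []
        · simp [hk, hup] at hj ⊢
          simpa [hup] using hj
        · simpa [hk, hup] using hj
      have hkle : k ≤ w₁.length := by
        by_cases hup : u p = []
        · simp [hk, hup]
        · have h1 : 1 ≤ (u p).length := List.length_pos_iff.mpr hup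
          rw [hw₁k, len_flatten_replicate]
          simp [hk, hup]
          calc j = j * 1 := (mul_one j).symm
            _ ≤ j * (u p).length := Nat.mul_le_mul_left _ h1
      cases hw₂c : w₂ with
      | nil =>
          refine ⟨[], k, ?_, by simp, ?_, by simp [heads], ?_⟩
          · rw [hsplit, hw₂c]
            simp [decode, ← hw₁k]
          · calc k ≤ w₁.length := hkle
              _ ≤ w.length := by rw [hsplit]; simp
          · intro h hh
            simp [heads] at hh
            exact ⟨[], List.nil_prefix, by simp [prun_nil, hh]⟩
      | cons a w₂' =>
          have hrun2' : ((μ p a).bind fun q => prun μ q w₂') = some f := by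
            rw [← prun_cons, ← hw₂c]; exact hrun2
          cases hq : μ p a with
          | none => rw [hq] at hrun2'; simp at hrun2'
          | some q =>
            rw [hq, Option.bind_some] at hrun2'
            have hlen2' : w₂'.length ≤ N := by
              have h1 : w₂.length ≤ w.length := by rw [hsplit]; simp
              rw [hw₂c] at h1
              simp at h1
              omega
            obtain ⟨pairs', kf, hdec, hb, hkf, hnd, hvis⟩ := ih w₂' q f hlen2' hrun2'
            -- p is not visited in the run of q on w₂'
            have hnp : ∀ v, v <+: w₂' → prun μ q v ≠ some p := by
              intro v hv hvp
              obtain ⟨t, ht⟩ := hv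
              have hpre : (w₁ ++ a :: v) <+: w := by
                refine ⟨t, ?_⟩
                rw [hsplit, hw₂c, ← ht]
                simp
              have hm' : (w₁ ++ a :: v).length ≤ w.length := hpre.length_le
              have htake : w.take (w₁ ++ a :: v).length = w₁ ++ a :: v :=
                (List.prefix_iff_eq_take.mp hpre).symm
              have hQm' : Q (w₁ ++ a :: v).length := by
                rw [hQ]
                simp only
                rw [htake, prun_append, hrun1]
                simp [prun_cons, hq, hvp]
              have hgt : m < (w₁ ++ a :: v).length := by
                simp only [List.length_append, List.length_cons, hlen1]; omega
              exact Nat.findGreatest_is_greatest hgt hm' hQm'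
            have hw2len : w₂'.length ≤ w.length := by
              have h1 : w₂.length ≤ w.length := by rw [hsplit]; simp
              rw [hw₂c] at h1; simp at h1; omega
            refine ⟨(k, a) :: pairs', kf, ?_, ?_, le_trans hkf hw2len, ?_, ?_⟩
            · rw [hsplit, hw₂c]
              simp only [decode, hq, Option.getD_some, ← hw₁k, ← hdec]
            · intro x hx
              rcases List.mem_cons.mp hx with h1 | h2
              · subst h1
                calc k ≤ w₁.length := hkle
                  _ ≤ w.length := by rw [hsplit]; simp
              · exact le_trans (hb x h2) hw2len
            · simp only [heads, hq, Option.getD_some]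
              refine List.nodup_cons.mpr ⟨?_, hnd⟩
              intro hmem
              obtain ⟨v, hv, hvp⟩ := hvis p hmem
              exact hnp v hv hvp
            · intro h hh
              simp only [heads, hq, Option.getD_some, List.mem_cons] at hh
              rcases hh with h1 | h2
              · exact ⟨[], List.nil_prefix, by simp [prun_nil, h1]⟩
              · obtain ⟨v, hv, hvp⟩ := hvis h h2
                obtain ⟨t, ht⟩ := hv
                refine ⟨w₁ ++ a :: v, ⟨t, ?_⟩, ?_⟩
                · rw [hsplit, hw₂c, ← ht]; simp
                · rw [prun_append, hrun1]
                  simp [prun_cons, hq, hvp]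


lemma heads_length (p : P) (l : List (ℕ × α)) :
    (heads μ p₀ p l).length = l.length + 1 := by
  induction l generalizing p with
  | nil => rfl
  | cons x rest ih => cases x; simp [heads, ih]

lemma clamp_inj (n : ℕ) : ∀ (l l' : List (ℕ × α)),
    (∀ x ∈ l, x.1 ≤ n) → (∀ x ∈ l', x.1 ≤ n) →
    l.map (fun x => ((⟨min x.1 n, by omega⟩ : Fin (n+1)), (some x.2 : Option α))) =
      l'.map (fun x => ((⟨min x.1 n, by omega⟩ : Fin (n+1)), (some x.2 : Option α))) →
    l = l'
  | [], [], _, _, _ => rfl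
  | [], x::l', _, _, h => by simp at h
  | x::l, [], _, _, h => by simp at h
  | x::l, y::l', hb, hb', h => by
      simp only [List.map_cons, List.cons.injEq, Prod.mk.injEq, Fin.mk.injEq,
        Option.some.injEq] at h
      have hx := hb x (by simp)
      have hy := hb' y (by simp)
      have h1 : x = y := by
        obtain ⟨⟨hk, ha⟩, _⟩ := h
        have : x.1 = y.1 := by omega
        exact Prod.ext this ha
      have h2 : l = l' := clamp_inj n l l' (fun z hz => hb z (by simp [hz]))
        (fun z hz => hb' z (by simp [hz])) h.2
      rw [h1, h2]

end Stmt17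

/-- Every language recognized by a polycyclic partial DFA is sparse: if for each
state `p` all loops at `p` are powers of a single word `u_p`, then the number of
accepted words of length `n` is `O(n^{|P|})`. -/
theorem stmt_17 {P α : Type*} [Fintype P] [Fintype α]
    (μ : P → α → Option P) (p₀ : P) (F : Set P)
    (hpoly : ∀ p : P, ∃ u : List α, ∀ w : List α,
      prun μ p w = some p → ∃ j : ℕ, w = (List.replicate j u).flatten) :
    ∃ C : ℕ, ∀ n : ℕ,
      Nat.card {w : List α // (∃ f ∈ F, prun μ p₀ w = some f) ∧ w.length = n} ≤
        C * (n + 1) ^ Fintype.card P := by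
  classical
  choose u hu using hpoly
  refine ⟨(Fintype.card P + 1) * (Fintype.card α + 1) ^ Fintype.card P, fun n => ?_⟩
  set cP := Fintype.card P with hcP
  set S := {w : List α // (∃ f ∈ F, prun μ p₀ w = some f) ∧ w.length = n} with hS
  have key : ∀ w : S, ∃ (pairs : List (ℕ × α)) (kf : ℕ),
      (w : List α) = Stmt17.decode μ p₀ u p₀ pairs kf ∧
      (∀ x ∈ pairs, x.1 ≤ n) ∧ kf ≤ n ∧ pairs.length + 1 ≤ cP := by
    rintro ⟨w, ⟨f, hf, hrun⟩, hlen⟩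
    obtain ⟨pairs, kf, hdec, hb, hkf, hnd, hvis⟩ :=
      Stmt17.decomp μ p₀ u hu w.length w p₀ f le_rfl hrun
    refine ⟨pairs, kf, hdec, by simpa [hlen] using hb, hlen ▸ hkf, ?_⟩
    have h1 := hnd.length_le_card
    rwa [Stmt17.heads_length] at h1
  choose pairs kf hdec hb hkf hplen using key
  set V := (Fin (cP + 1) × (Fin cP → Fin (n+1) × Option α)) with hV
  set L : S → List (Fin (n+1) × Option α) := fun w =>
    (pairs w).map (fun x => ((⟨min x.1 n, by omega⟩ : Fin (n+1)), (some x.2 : Option α)))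
      ++ [(⟨min (kf w) n, by omega⟩, none)] with hL
  have hLlen : ∀ w, (L w).length = (pairs w).length + 1 := by
    intro w; simp [hL]
  have hLle : ∀ w, (L w).length ≤ cP := fun w => by
    rw [hLlen]; exact hplen w
  set enc : S → V := fun w => (⟨(L w).length, by have := hLle w; omega⟩,
    fun i => (L w).getD i (⟨0, n.succ_pos⟩, none)) with henc
  have hinj : Function.Injective enc := by
    intro w w' he
    have hlen1 : (L w).length = (L w').length := by
      simpa [henc] using congrArg (fun z => (z.1 : ℕ)) he
    have h2 := congrArg Prod.snd he
    simp only [henc] at h2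
    have hLeq : L w = L w' := by
      apply List.ext_getElem hlen1
      intro i hi hi'
      have hic : i < cP := lt_of_lt_of_le hi (hLle w)
      have h3 := congrFun h2 ⟨i, hic⟩
      simpa [List.getD, List.getElem?_eq_getElem hi, List.getElem?_eq_getElem hi'] using h3
    have hplen' : (pairs w).length = (pairs w').length := by
      have := hLlen w; have := hLlen w'; omega
    rw [hL] at hLeq
    simp only at hLeq
    obtain ⟨hmap, hlast⟩ := List.append_inj hLeq (by simp [hplen'])
    have hpair : pairs w = pairs w' := Stmt17.clamp_inj n _ _ (hb w) (hb w') hmap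
    have hkfe : kf w = kf w' := by
      simp only [List.cons.injEq, Prod.mk.injEq, Fin.mk.injEq] at hlast
      have h1 := hlast.1.1
      have := hkf w; have := hkf w'
      omega
    apply Subtype.ext
    rw [hdec w, hdec w', hpair, hkfe]
  have hcard : Nat.card S ≤ Nat.card V := Nat.card_le_card_of_injective enc hinj
  have hVcard : Nat.card V = (cP + 1) * ((n + 1) * (Fintype.card α + 1)) ^ cP := by
    simp [hV, Nat.card_eq_fintype_card]
  calc Nat.card S ≤ Nat.card V := hcard
    _ = (cP + 1) * (Fintype.card α + 1) ^ cP * (n + 1) ^ cP := by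
        rw [hVcard, mul_pow]; ring
    _ = (Fintype.card P + 1) * (Fintype.card α + 1) ^ Fintype.card P * (n + 1) ^ Fintype.card P := by
        rw [hcP]
end
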